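/- arXiv:2204.10604 — 5 statements merged into one kernel-verified Lean document; each statement's English description precedes it below -/
import Mathlib

section
/- For any real number β > 0, the integral ∫₀^∞ (t⁻¹ + t) e^{-βπ(t⁻² + t²)} dt/t equals e^{-2πβ}/√β. -/
open MeasureTheory Set

/-!
The substitution `u = t - t⁻¹` maps `(0, ∞)` bijectively onto `ℝ`, with `du = (1 + t⁻²) dt` and
`t⁻² + t² = u² + 2`. Since `(t⁻¹ + t) / t = 1 + t⁻²`, the integral becomes
`e^{-2πβ} ∫_ℝ e^{-βπu²} du = e^{-2πβ} / √β`.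
-/

lemma hasDerivAt_sub_inv {x : ℝ} (hx : x ≠ 0) :
    HasDerivAt (fun t : ℝ => t - t⁻¹) (1 + x⁻¹ ^ 2) x := by
  have h := (hasDerivAt_id x).sub (hasDerivAt_inv hx)
  rwa [sub_neg_eq_add, ← inv_pow] at h

lemma strictMonoOn_sub_inv : StrictMonoOn (fun t : ℝ => t - t⁻¹) (Ioi 0) := by
  intro a ha b _ hab
  have : b⁻¹ < a⁻¹ := inv_strictAnti₀ ha hab
  simp only
  linarith

lemma image_sub_inv_Ioi : (fun t : ℝ => t - t⁻¹) '' Ioi 0 = univ := by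
  refine eq_univ_of_forall fun u => ?_
  -- the positive root of `t² - u t - 1 = 0`
  set s := Real.sqrt (u ^ 2 + 4)
  have hs : s ^ 2 = u ^ 2 + 4 := Real.sq_sqrt (by positivity)
  have hsu : |u| < s := by
    rw [← Real.sqrt_sq_eq_abs]
    exact Real.sqrt_lt_sqrt (sq_nonneg u) (by linarith)
  have ht : 0 < (u + s) / 2 := by linarith [neg_abs_le u]
  refine ⟨(u + s) / 2, ht, ?_⟩
  have hus : u + s ≠ 0 := by linarith
  show (u + s) / 2 - ((u + s) / 2)⁻¹ = u
  rw [inv_div]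
  field_simp
  nlinarith

theorem integral_Ioi_comp_sub_inv {E : Type*} [NormedAddCommGroup E] [NormedSpace ℝ E]
    (f : ℝ → E) : ∫ t in Ioi (0 : ℝ), (1 + t⁻¹ ^ 2) • f (t - t⁻¹) = ∫ u, f u := by
  calc ∫ t in Ioi (0 : ℝ), (1 + t⁻¹ ^ 2) • f (t - t⁻¹)
      = ∫ t in Ioi (0 : ℝ), |1 + t⁻¹ ^ 2| • f (t - t⁻¹) :=
        setIntegral_congr_fun measurableSet_Ioi fun t _ => by rw [abs_of_pos (by positivity)]
    _ = ∫ u in (fun t : ℝ => t - t⁻¹) '' Ioi 0, f u :=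
        (integral_image_eq_integral_abs_deriv_smul measurableSet_Ioi
          (fun x hx => (hasDerivAt_sub_inv (ne_of_gt hx)).hasDerivWithinAt)
          strictMonoOn_sub_inv.injOn f).symm
    _ = ∫ u, f u := by rw [image_sub_inv_Ioi, setIntegral_univ]

theorem stmt_0_general (β : ℝ) :
    ∫ t in Set.Ioi (0 : ℝ),
        (t⁻¹ + t) * Real.exp (-β * Real.pi * (t⁻¹ ^ 2 + t ^ 2)) / t
      = Real.exp (-2 * Real.pi * β) / Real.sqrt β := by
  have hintegrand : ∀ t ∈ Ioi (0 : ℝ),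
      (t⁻¹ + t) * Real.exp (-β * Real.pi * (t⁻¹ ^ 2 + t ^ 2)) / t
        = (1 + t⁻¹ ^ 2) • (Real.exp (-2 * Real.pi * β) *
            Real.exp (-(β * Real.pi) * (t - t⁻¹) ^ 2)) := by
    intro t ht
    have ht0 : t ≠ 0 := ne_of_gt ht
    rw [smul_eq_mul, ← Real.exp_add]
    field_simp
    ring_nf
  have hgauss : ∫ u : ℝ, Real.exp (-(β * Real.pi) * u ^ 2) = (Real.sqrt β)⁻¹ := by
    rw [integral_gaussian, ← Real.sqrt_inv]
    congr 1
    field_simp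
  rw [setIntegral_congr_fun measurableSet_Ioi hintegrand]
  exact (integral_Ioi_comp_sub_inv fun u =>
      Real.exp (-2 * Real.pi * β) * Real.exp (-(β * Real.pi) * u ^ 2)).trans
    (by rw [integral_const_mul, hgauss, div_eq_mul_inv])

/-- For any real `β > 0`, the integral
`∫₀^∞ (t⁻¹ + t) e^{-βπ(t⁻² + t²)} dt/t` equals `e^{-2πβ}/√β`. -/
theorem stmt_0 (β : ℝ) (hβ : 0 < β) :
    ∫ t in Set.Ioi (0 : ℝ),
        (t⁻¹ + t) * Real.exp (-β * Real.pi * (t⁻¹ ^ 2 + t ^ 2)) / t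
      = Real.exp (-2 * Real.pi * β) / Real.sqrt β :=
  stmt_0_general β
end

section
/- Let P_r denote the r-th Legendre polynomial and set r₀ = ⌊r/2⌋. Then 2^{-r} ∑_{s=0}^{r} C(r,s)² (x-1)^{r-s}(x+1)^s = (-1)^{r₀} ∑_{s=0}^{r₀} C(r₀ - r - 1/2, r₀ - s) · C(r - r₀ - 1/2, s) · x^{r-2s}, where C(a,k) denotes the generalized binomial coefficient. -/
/-!
Both sides are `2⁻ʳ / r!` times the `r`-th derivative of `(x² - 1)ʳ` (Rodrigues' formula).
Leibniz's rule applied to `(x + 1)ʳ (x - 1)ʳ` gives the left-hand sum, while differentiating the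
binomial expansion of `(x² - 1)ʳ` termwise gives `∑ₛ (-1)ˢ C(r, s) C(2r - 2s, r) x^(r - 2s)`.
The half-integer binomial coefficients are ratios of products of consecutive odd numbers, and with
`u = ⌊r/2⌋ - s`, `v = ⌈r/2⌉ - s` their product reduces to that coefficient through the identity
`v! (u + v)! 2ᵛ = (2v)! u! 2ᵘ`, which holds because `v - u ∈ {0, 1}`.
-/

open Finset Polynomial
open scoped Nat

noncomputable def genBinom (a : ℝ) (k : ℕ) : ℝ :=
  (∏ i ∈ Finset.range k, (a - i)) / (Nat.factorial k)

theorem prod_range_add_half_eq (c n : ℕ) :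
    ∏ i ∈ range n, ((c : ℝ) + 1 / 2 + i) =
      (2 * c + 2 * n)! * c ! / ((2 * c)! * (c + n)! * 4 ^ n) := by
  induction n with
  | zero => simp [div_self, Nat.factorial_ne_zero]
  | succ n ih =>
    rw [prod_range_succ, ih, show 2 * c + 2 * (n + 1) = 2 * c + 2 * n + 1 + 1 by ring,
      ← add_assoc, Nat.factorial_succ, Nat.factorial_succ, Nat.factorial_succ]
    push_cast
    field_simp
    ring

theorem genBinom_neg_sub_half (m k : ℕ) :
    genBinom (-m - 1 / 2) k = (-1) ^ k * (∏ i ∈ range k, ((m : ℝ) + 1 / 2 + i)) / k ! := by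
  have hneg (i : ℕ) : -(m : ℝ) - 1 / 2 - i = -1 * (m + 1 / 2 + i) := by ring
  simp_rw [genBinom, hneg, prod_mul_distrib, prod_const, card_range]

theorem genBinom_sub_half {m s : ℕ} (h : s ≤ m) :
    genBinom (m - 1 / 2) s = (∏ i ∈ range s, (((m - s : ℕ) : ℝ) + 1 / 2 + i)) / s ! := by
  rw [genBinom, ← prod_range_reflect]
  congr 1
  refine prod_congr rfl fun i hi => ?_
  have hi := mem_range.mp hi
  rw [Nat.cast_sub h, Nat.cast_sub (by omega), Nat.cast_sub (by omega)]
  push_cast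
  ring

theorem genBinom_neg_sub_half_mul_genBinom_sub_half {m s : ℕ} (k : ℕ) (h : s ≤ m) :
    genBinom (-m - 1 / 2) k * genBinom (m - 1 / 2) s =
      (-1) ^ k * (2 * m + 2 * k)! * (m - s)! /
        ((2 * m - 2 * s)! * (m + k)! * 4 ^ (s + k) * k ! * s !) := by
  have hprod : (∏ i ∈ range s, (((m - s : ℕ) : ℝ) + 1 / 2 + i)) *
      ∏ i ∈ range k, ((m : ℝ) + 1 / 2 + i) =
        ∏ i ∈ range (s + k), (((m - s : ℕ) : ℝ) + 1 / 2 + i) := by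
    rw [prod_range_add]
    congr 1
    refine prod_congr rfl fun i _ => ?_
    rw [Nat.cast_sub h]
    push_cast
    ring
  rw [genBinom_neg_sub_half, genBinom_sub_half h, div_mul_div_comm, mul_assoc,
    mul_comm (∏ i ∈ range k, _), hprod, prod_range_add_half_eq,
    show 2 * (m - s) + 2 * (s + k) = 2 * m + 2 * k by omega,
    show m - s + (s + k) = m + k by omega, show 2 * (m - s) = 2 * m - 2 * s by omega]
  field_simp

theorem Nat.factorial_mul_factorial_add_mul_two_pow {u v : ℕ} (h₁ : u ≤ v) (h₂ : v ≤ u + 1) :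
    v ! * (u + v)! * 2 ^ v = (2 * v)! * u ! * 2 ^ u := by
  obtain rfl | rfl : v = u ∨ v = u + 1 := by omega
  · rw [two_mul]
    ring
  · rw [show 2 * (u + 1) = u + u + 1 + 1 by ring, show u + (u + 1) = u + u + 1 by ring,
      Nat.factorial_succ (u + u + 1), Nat.factorial_succ u]
    ring

theorem neg_one_pow_mul_genBinom_mul_genBinom {r s : ℕ} (hs : s ≤ r / 2) :
    (-1) ^ (r / 2) * (genBinom (((r / 2 : ℕ) : ℝ) - r - 1 / 2) (r / 2 - s) *
      genBinom ((r : ℝ) - ((r / 2 : ℕ) : ℝ) - 1 / 2) s) =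
      (-1) ^ s * r.choose s * (2 * r - 2 * s).choose r / 2 ^ r := by
  obtain ⟨u, hu⟩ : ∃ u, r / 2 = s + u := ⟨r / 2 - s, by omega⟩
  obtain ⟨v, hv⟩ : ∃ v, r - r / 2 = s + v := ⟨r - r / 2 - s, by omega⟩
  have huv : u ≤ v ∧ v ≤ u + 1 := by omega
  obtain rfl : r = 2 * s + u + v := by omega
  rw [hu, show s + u - s = u by omega,
    show ((s + u : ℕ) : ℝ) - ((2 * s + u + v : ℕ) : ℝ) - 1 / 2 = -((s + v : ℕ) : ℝ) - 1 / 2 by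
      push_cast; ring,
    show ((2 * s + u + v : ℕ) : ℝ) - ((s + u : ℕ) : ℝ) - 1 / 2 = ((s + v : ℕ) : ℝ) - 1 / 2 by
      push_cast; ring,
    genBinom_neg_sub_half_mul_genBinom_sub_half u (by omega : s ≤ s + v),
    Nat.cast_choose ℝ (by omega : s ≤ 2 * s + u + v),
    Nat.cast_choose ℝ (by omega : 2 * s + u + v ≤ 2 * (2 * s + u + v) - 2 * s),
    show 2 * (s + v) + 2 * u = 2 * s + 2 * u + 2 * v by ring,
    show 2 * (2 * s + u + v) - 2 * s = 2 * s + 2 * u + 2 * v by omega,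
    show s + v - s = v by omega, show 2 * (s + v) - 2 * s = 2 * v by omega,
    show s + v + u = s + u + v by ring, show 2 * s + u + v - s = s + u + v by omega,
    show 2 * s + 2 * u + 2 * v - (2 * s + u + v) = u + v by omega]
  have hsign : (-1 : ℝ) ^ (s + u) * (-1) ^ u = (-1) ^ s := by
    rw [pow_add, mul_assoc, ← mul_pow]
    norm_num
  have hfact : (v ! * (u + v)! * 2 ^ (2 * s + u + v) : ℝ) = (2 * v)! * u ! * 4 ^ (s + u) := by
    have key := Nat.factorial_mul_factorial_add_mul_two_pow huv.1 huv.2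
    calc (v ! * (u + v)! * 2 ^ (2 * s + u + v) : ℝ)
        = ((v ! * (u + v)! * 2 ^ v : ℕ) : ℝ) * (2 ^ (2 * s) * 2 ^ u) := by push_cast; ring
      _ = (2 * v)! * u ! * 2 ^ (2 * (s + u)) := by rw [key]; push_cast; ring
      _ = (2 * v)! * u ! * 4 ^ (s + u) := by rw [pow_mul]; norm_num
  rw [← hsign]
  field_simp
  linear_combination hfact

section Rodrigues

variable {R : Type*} [CommRing R]

theorem iterate_derivative_X_sq_sub_one_pow_eq_sum_choose_sq (r : ℕ) :
    derivative^[r] (((X : R[X]) ^ 2 - 1) ^ r) =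
      (r ! : R[X]) *
        ∑ s ∈ range (r + 1), (r.choose s : R[X]) ^ 2 * (X - 1) ^ (r - s) * (X + 1) ^ s := by
  rw [show (X : R[X]) ^ 2 - 1 = (X + C 1) * (X - C 1) by rw [C_1]; ring, mul_pow,
    iterate_derivative_mul, mul_sum]
  refine sum_congr rfl fun k hk => ?_
  have hk : k ≤ r := Nat.lt_succ_iff.mp (mem_range.mp hk)
  rw [iterate_derivative_X_add_pow, iterate_derivative_X_sub_pow, Nat.sub_sub_self hk, C_1,
    Nat.descFactorial_eq_factorial_mul_choose, Nat.descFactorial_eq_factorial_mul_choose,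
    Nat.choose_symm hk, ← Nat.choose_mul_factorial_mul_factorial hk]
  simp only [nsmul_eq_mul, Nat.cast_mul]
  ring

theorem iterate_derivative_X_sq_sub_one_pow (r : ℕ) :
    derivative^[r] (((X : R[X]) ^ 2 - 1) ^ r) =
      (r ! : R[X]) * ∑ s ∈ range (r + 1),
        (-1) ^ s * (r.choose s : R[X]) * ((2 * r - 2 * s).choose r : R[X]) * X ^ (r - 2 * s) := by
  rw [show (X : R[X]) ^ 2 - 1 = -1 + X ^ 2 by ring, add_pow, iterate_derivative_sum, mul_sum]
  refine sum_congr rfl fun s hs => ?_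
  have hs : s ≤ r := Nat.lt_succ_iff.mp (mem_range.mp hs)
  rw [← pow_mul, show (-1 : R[X]) ^ s * X ^ (2 * (r - s)) * (r.choose s : R[X]) =
      C ((-1) ^ s * (r.choose s : R)) * X ^ (2 * (r - s)) by simp; ring,
    iterate_derivative_C_mul, iterate_derivative_X_pow_eq_natCast_mul,
    Nat.descFactorial_eq_factorial_mul_choose, show 2 * (r - s) = 2 * r - 2 * s by omega,
    show 2 * r - 2 * s - r = r - 2 * s by omega]
  simp only [C_mul, C_pow, C_neg, C_1, Nat.cast_mul, ← C_eq_natCast]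
  ring

theorem sum_choose_sq_mul_sub_one_pow_mul_add_one_pow [IsDomain R] [CharZero R] (r : ℕ)
    (x : R) :
    ∑ s ∈ range (r + 1), (r.choose s : R) ^ 2 * (x - 1) ^ (r - s) * (x + 1) ^ s =
      ∑ s ∈ range (r / 2 + 1),
        (-1) ^ s * (r.choose s : R) * ((2 * r - 2 * s).choose r : R) * x ^ (r - 2 * s) := by
  have h := congrArg (eval x)
    ((iterate_derivative_X_sq_sub_one_pow_eq_sum_choose_sq (R := R) r).symm.trans
      (iterate_derivative_X_sq_sub_one_pow r))
  simp only [eval_mul, eval_finsetSum, eval_pow, eval_natCast, eval_sub, eval_add, eval_neg,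
    eval_X, eval_one] at h
  rw [mul_left_cancel₀ (Nat.cast_ne_zero.mpr r.factorial_ne_zero) h]
  refine (sum_subset (range_subset_range.mpr (by omega)) fun s hs hs' => ?_).symm
  rw [mem_range] at hs hs'
  rw [Nat.choose_eq_zero_of_lt (show 2 * r - 2 * s < r by omega), Nat.cast_zero, mul_zero,
    zero_mul]

end Rodrigues

/-- The two expressions for the `r`-th Legendre polynomial:
`2^{-r} ∑_{s=0}^{r} C(r,s)² (x-1)^{r-s}(x+1)^s
  = (-1)^{r₀} ∑_{s=0}^{r₀} C(r₀-r-1/2, r₀-s) C(r-r₀-1/2, s) x^{r-2s}`, `r₀ = ⌊r/2⌋`. -/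
theorem stmt_2 (r : ℕ) (x : ℝ) :
    ((2 : ℝ) ^ r)⁻¹ *
        ∑ s ∈ Finset.range (r + 1), (r.choose s : ℝ) ^ 2 * (x - 1) ^ (r - s) * (x + 1) ^ s
      = (-1 : ℝ) ^ (r / 2) *
        ∑ s ∈ Finset.range (r / 2 + 1),
          genBinom (((r / 2 : ℕ) : ℝ) - r - 1 / 2) (r / 2 - s) *
            genBinom ((r : ℝ) - ((r / 2 : ℕ) : ℝ) - 1 / 2) s * x ^ (r - 2 * s) := by
  rw [sum_choose_sq_mul_sub_one_pow_mul_add_one_pow, mul_sum, mul_sum]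
  refine sum_congr rfl fun s hs => ?_
  have hs : s ≤ r / 2 := Nat.lt_succ_iff.mp (mem_range.mp hs)
  linear_combination x ^ (r - 2 * s) * (neg_one_pow_mul_genBinom_mul_genBinom hs).symm
end

section
/- Let ϱ be an odd continuous character of H₁(𝔸)/H₁(ℚ) (where H₁(ℚ) ≅ F¹ for a real quadratic field F), with ϱ(h) = sgn(h_∞)ϱ_f(h_f). If ε_ϱ > 1 generates the cyclic group Γ_ϱ = H₁(ℚ)⁺ ∩ K_ϱ of totally positive units fixed by ϱ, then for m > 0 and β ∈ F^× with sign(β) = sign(β'), the limit as v → ∞ of e^{2πmv} · 2 log(ε_ϱ) ∫₀^∞ φ⁺_∞(t⁻¹·(β√v, β'√v)) {log t / log ε_ϱ} dt/t, with φ⁺_∞(x₁,x₂) = (x₁+x₂)e^{-π(x₁²+x₂²)} and {a} the modified fractional part with {0}=1/2, equals sgn(β)·2 log(ε_ϱ)·{log√|β/β'| / log ε_ϱ}. -/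
/-!
Completing the square, `(p/t)² + (qt)² = (qt - p/t)² + 2pq`, and the substitution
`w = qt - p/t = 2√(pq) sinh (log t - log √(p/q))` with `p = β√v`, `q = β'√v` turn
`e^{2πmv}` times the integral into
`∫ e^{-πw²} {(log √(β/β') + arsinh (w / 2√(mv))) / log ε_ϱ} dw`.
As `v → ∞` dominated convergence sends this to the mean of the one-sided limits of `{·}` at
`log √(β/β') / log ε_ϱ`, and that mean is the modified fractional part itself.
Replacing `(β, β')` by `(-β, -β')` negates the integrand, which reduces everything to
`β, β' > 0`.
-/

open MeasureTheory

/-- The modified fractional part: `{a} = a - lim_{ε→0}(⌊a+ε⌋+⌊a-ε⌋)/2`, i.e. the usual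
fractional part for `a ∉ ℤ` and `1/2` for `a ∈ ℤ`. -/
noncomputable def mfrac (a : ℝ) : ℝ :=
  open Classical in
  if ∃ n : ℤ, a = n then 1 / 2 else Int.fract a

open Real Filter Set Topology

lemma mfrac_eq_ite (a : ℝ) : mfrac a = if Int.fract a = 0 then 1 / 2 else Int.fract a := by
  by_cases h : Int.fract a = 0
  · obtain ⟨n, hn⟩ := Int.fract_eq_zero_iff.1 h
    rw [if_pos h, mfrac, if_pos ⟨n, hn.symm⟩]
  · rw [if_neg h, mfrac, if_neg]
    rintro ⟨n, rfl⟩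
    exact h (Int.fract_intCast n)

lemma measurable_mfrac : Measurable mfrac := by
  simp_rw [funext mfrac_eq_ite]
  exact Measurable.ite (measurableSet_eq_fun measurable_fract measurable_const)
    measurable_const measurable_fract

lemma abs_mfrac_le_one (a : ℝ) : |mfrac a| ≤ 1 := by
  rw [mfrac_eq_ite]
  split_ifs
  · norm_num
  · rw [abs_of_nonneg (Int.fract_nonneg a)]
    exact (Int.fract_lt_one a).le

lemma mfrac_neg (a : ℝ) : mfrac (-a) = 1 - mfrac a := by
  by_cases h : Int.fract a = 0
  · rw [mfrac_eq_ite, mfrac_eq_ite, if_pos (Int.fract_neg_eq_zero.2 h), if_pos h]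
    norm_num
  · rw [mfrac_eq_ite, mfrac_eq_ite, if_neg (mt Int.fract_neg_eq_zero.1 h), if_neg h,
      Int.fract_neg h]

lemma mfrac_eq_midpoint (a : ℝ) : mfrac a = (Int.fract a + (1 - Int.fract (-a))) / 2 := by
  rw [mfrac_eq_ite]
  split_ifs with h
  · rw [h, Int.fract_neg_eq_zero.2 h]; norm_num
  · rw [Int.fract_neg h]; ring

lemma tendsto_mfrac_nhdsGT (a : ℝ) : Tendsto mfrac (𝓝[>] a) (𝓝 (Int.fract a)) := by
  have hlin : Tendsto (fun x : ℝ => x - ⌊a⌋) (𝓝[>] a) (𝓝 (Int.fract a)) :=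
    tendsto_nhdsWithin_of_tendsto_nhds
      ((continuous_sub_right _).tendsto' _ _ (Int.self_sub_floor a))
  refine hlin.congr' ?_
  filter_upwards [Ioo_mem_nhdsGT (Int.lt_floor_add_one a)] with x hx
  have hfloor : ⌊x⌋ = ⌊a⌋ := Int.floor_eq_iff.2 ⟨(Int.floor_le a).trans hx.1.le, hx.2⟩
  have hfract : Int.fract x = x - ⌊a⌋ := by rw [Int.fract, hfloor]
  have hne : Int.fract x ≠ 0 := by
    rw [hfract, sub_ne_zero]
    exact fun h => (Int.floor_le a).not_gt (h ▸ hx.1)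
  rw [mfrac_eq_ite, if_neg hne, hfract]

lemma tendsto_mfrac_nhdsLT (a : ℝ) : Tendsto mfrac (𝓝[<] a) (𝓝 (1 - Int.fract (-a))) := by
  have h := ((tendsto_mfrac_nhdsGT (-a)).comp tendsto_neg_nhdsLT).const_sub 1
  refine h.congr fun x => ?_
  simp [mfrac_neg]

lemma tendsto_setIntegral_gaussian_mul_comp_mul {g : ℝ → ℝ} (hg : Measurable g) {C : ℝ}
    (hC : ∀ x, |g x| ≤ C) {s : Set ℝ} (hs : MeasurableSet s) {l : Filter ℝ}
    [l.IsCountablyGenerated] {A : ℝ}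
    (hlim : ∀ w ∈ s, Tendsto (fun r => g (r * w)) l (𝓝 A)) :
    Tendsto (fun r => ∫ w in s, exp (-π * w ^ 2) * g (r * w)) l
      (𝓝 ((∫ w in s, exp (-π * w ^ 2)) * A)) := by
  rw [← integral_mul_const]
  refine tendsto_integral_filter_of_dominated_convergence (fun w => exp (-π * w ^ 2) * C)
    (Eventually.of_forall fun r => ?_) (Eventually.of_forall fun r => ae_of_all _ fun w => ?_)
    ((integrable_exp_neg_mul_sq pi_pos).mul_const C).integrableOn
    ((ae_restrict_iff' hs).2 (Eventually.of_forall fun w hw => (hlim w hw).const_mul _))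
  · exact (by fun_prop : Measurable fun w => exp (-π * w ^ 2) * g (r * w)).aestronglyMeasurable
  · rw [norm_mul, norm_of_nonneg (exp_pos _).le, norm_eq_abs]
    exact mul_le_mul_of_nonneg_left (hC _) (exp_pos _).le

lemma tendsto_integral_gaussian_mul_comp_mul {g : ℝ → ℝ} (hg : Measurable g) {C : ℝ}
    (hC : ∀ x, |g x| ≤ C) {A B : ℝ} (hA : Tendsto g (𝓝[<] 0) (𝓝 A))
    (hB : Tendsto g (𝓝[>] 0) (𝓝 B)) :
    Tendsto (fun r => ∫ w, exp (-π * w ^ 2) * g (r * w)) (𝓝[>] 0) (𝓝 ((A + B) / 2)) := by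
  have hIoi : ∫ w in Ioi 0, exp (-π * w ^ 2) = 1 / 2 := by
    rw [integral_gaussian_Ioi, div_self pi_ne_zero, sqrt_one]
  have hIio : ∫ w in Iio 0, exp (-π * w ^ 2) = 1 / 2 := by
    rw [← integral_Iic_eq_integral_Iio, ← neg_zero, ← integral_comp_neg_Ioi]
    simpa using hIoi
  have hscale (w : ℝ) : Tendsto (fun r => r * w) (𝓝[>] 0) (𝓝 0) :=
    tendsto_nhdsWithin_of_tendsto_nhds ((continuous_mul_const w).tendsto' 0 0 (zero_mul w))
  have hneg := tendsto_setIntegral_gaussian_mul_comp_mul hg hC measurableSet_Iio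
    (l := 𝓝[>] 0) (A := A) fun w (hw : w < 0) => hA.comp <| tendsto_nhdsWithin_iff.2
      ⟨hscale w, eventually_nhdsWithin_of_forall fun r hr => mul_neg_of_pos_of_neg hr hw⟩
  have hpos := tendsto_setIntegral_gaussian_mul_comp_mul hg hC measurableSet_Ioi
    (l := 𝓝[>] 0) (A := B) fun w (hw : 0 < w) => hB.comp <| tendsto_nhdsWithin_iff.2
      ⟨hscale w, eventually_nhdsWithin_of_forall fun r hr => mul_pos hr hw⟩
  rw [hIio] at hneg
  rw [hIoi] at hpos
  convert hneg.add hpos using 2 with r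
  · have hint : Integrable fun w => exp (-π * w ^ 2) * g (r * w) :=
      (integrable_exp_neg_mul_sq pi_pos).mul_bdd
        (by fun_prop : Measurable fun w => g (r * w)).aestronglyMeasurable
        (ae_of_all _ fun w => hC _)
    rw [← intervalIntegral.integral_Iic_add_Ioi hint.integrableOn hint.integrableOn,
      integral_Iic_eq_integral_Iio]
  · ring

lemma tendsto_integral_gaussian_mul_mfrac_comp {h : ℝ → ℝ} (hmono : StrictMono h)
    (hcont : ContinuousAt h 0) :
    Tendsto (fun r => ∫ w, exp (-π * w ^ 2) * mfrac (h (r * w))) (𝓝[>] 0)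
      (𝓝 (mfrac (h 0))) := by
  have hleft : Tendsto h (𝓝[<] 0) (𝓝[<] (h 0)) :=
    tendsto_nhdsWithin_iff.2 ⟨hcont.tendsto.mono_left nhdsWithin_le_nhds,
      eventually_nhdsWithin_of_forall fun _ hy => hmono hy⟩
  have hright : Tendsto h (𝓝[>] 0) (𝓝[>] (h 0)) :=
    tendsto_nhdsWithin_iff.2 ⟨hcont.tendsto.mono_left nhdsWithin_le_nhds,
      eventually_nhdsWithin_of_forall fun _ hy => hmono hy⟩
  rw [mfrac_eq_midpoint, add_comm (Int.fract _)]
  exact tendsto_integral_gaussian_mul_comp_mul (measurable_mfrac.comp hmono.monotone.measurable)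
    (fun _ => abs_mfrac_le_one _) ((tendsto_mfrac_nhdsLT _).comp hleft)
    ((tendsto_mfrac_nhdsGT _).comp hright)

noncomputable def phiPlus (x₁ x₂ : ℝ) : ℝ :=
  (x₁ + x₂) * exp (-π * (x₁ ^ 2 + x₂ ^ 2))

lemma phiPlus_neg (x₁ x₂ : ℝ) : phiPlus (-x₁) (-x₂) = -phiPlus x₁ x₂ := by
  simp only [phiPlus, neg_sq]
  ring

lemma mul_sub_div_eq_mul_sinh {p q t : ℝ} (hp : 0 < p) (hq : 0 < q) (ht : 0 < t) :
    q * t - p / t = 2 * √(p * q) * sinh (log t - log √(p / q)) := by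
  have hc : 0 < √(p / q) := sqrt_pos.2 (div_pos hp hq)
  rw [sinh_eq, exp_sub, exp_neg, exp_sub, exp_log ht, exp_log hc, sqrt_mul hp.le,
    sqrt_div hp.le]
  have ha := sq_sqrt hp.le
  have hb := sq_sqrt hq.le
  have ha' := sqrt_pos.2 hp
  have hb' := sqrt_pos.2 hq
  field_simp
  rw [ha, hb]
  ring

lemma setIntegral_Ioi_phiPlus_mul_div_eq {p q : ℝ} (hp : 0 < p) (hq : 0 < q) (φ : ℝ → ℝ) :
    ∫ t in Ioi 0, phiPlus (p / t) (q * t) * φ (log t) / t =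
      exp (-2 * π * (p * q)) *
        ∫ w, exp (-π * w ^ 2) * φ (log √(p / q) + arsinh ((2 * √(p * q))⁻¹ * w)) := by
  set c := √(p / q)
  set k := 2 * √(p * q)
  have hc : 0 < c := sqrt_pos.2 (div_pos hp hq)
  have hk : 0 < k := by positivity
  have hsinh : ∀ t ∈ Ioi (0 : ℝ), q * t - p / t = k * sinh (log t - log c) :=
    fun t ht => mul_sub_div_eq_mul_sinh hp hq ht
  have hleft : ∀ t ∈ Ioi (0 : ℝ), log c + arsinh (k⁻¹ * (q * t - p / t)) = log t := by
    intro t ht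
    rw [hsinh t ht, inv_mul_cancel_left₀ hk.ne', arsinh_sinh]
    ring
  have hsurj : (fun t => q * t - p / t) '' Ioi 0 = univ := by
    have hpos (w : ℝ) : 0 < c * exp (arsinh (k⁻¹ * w)) := mul_pos hc (exp_pos _)
    refine eq_univ_of_forall fun w => ⟨c * exp (arsinh (k⁻¹ * w)), hpos w, ?_⟩
    change q * _ - p / _ = w
    rw [hsinh _ (hpos w), log_mul hc.ne' (exp_pos _).ne', log_exp, add_sub_cancel_left,
      sinh_arsinh, mul_inv_cancel_left₀ hk.ne']
  have hinj : InjOn (fun t => q * t - p / t) (Ioi 0) := fun t₁ ht₁ t₂ ht₂ h =>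
    log_injOn_pos ht₁ ht₂ <| by
      rw [← hleft t₁ ht₁, ← hleft t₂ ht₂]
      exact congrArg (fun x => log c + arsinh (k⁻¹ * x)) h
  have hderiv : ∀ t ∈ Ioi (0 : ℝ),
      HasDerivWithinAt (fun t => q * t - p / t) (q + p / t ^ 2) (Ioi 0) t := by
    intro t ht
    have h : HasDerivAt (fun t => q * t - p * t⁻¹) (q * 1 - p * -(t ^ 2)⁻¹) t :=
      ((hasDerivAt_id t).const_mul q).sub ((hasDerivAt_inv (ne_of_gt ht)).const_mul p)
    simpa only [div_eq_mul_inv] using h.hasDerivWithinAt.congr_deriv (by ring)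
  have hcov := integral_image_eq_integral_abs_deriv_smul measurableSet_Ioi hderiv hinj
    fun w => exp (-π * w ^ 2) * φ (log c + arsinh (k⁻¹ * w))
  rw [hsurj, setIntegral_univ] at hcov
  rw [hcov, ← integral_const_mul]
  refine setIntegral_congr_fun measurableSet_Ioi fun t ht => ?_
  have ht' : 0 < t := ht
  rw [hleft t ht, smul_eq_mul, abs_of_pos (by positivity), phiPlus,
    show -π * ((p / t) ^ 2 + (q * t) ^ 2) = -π * (q * t - p / t) ^ 2 + -2 * π * (p * q) by
      field_simp; ring, exp_add]
  field_simp
  ring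

lemma tendsto_exp_mul_integral_phiPlus_of_pos {β β' L : ℝ} (hβ : 0 < β) (hβ' : 0 < β')
    (hL : 0 < L) :
    Tendsto (fun v => exp (2 * π * (β * β') * v) *
        (2 * L * ∫ t in Ioi 0, phiPlus (β * √v / t) (β' * √v * t) * mfrac (log t / L) / t))
      atTop (𝓝 (2 * L * mfrac (log √(β / β') / L))) := by
  set h : ℝ → ℝ := fun y => (log √(β / β') + arsinh y) / L
  have hmono : StrictMono h := fun _ _ hxy => div_lt_div_of_pos_right
    (by linarith [arsinh_strictMono hxy]) hL
  have hcont : ContinuousAt h 0 := by fun_prop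
  have hscale : Tendsto (fun v => (2 * √(β * β' * v))⁻¹) atTop (𝓝[>] 0) := by
    refine tendsto_nhdsWithin_iff.2 ⟨tendsto_inv_atTop_zero.comp <|
      (tendsto_sqrt_atTop.comp (tendsto_id.const_mul_atTop (mul_pos hβ hβ'))).const_mul_atTop
        two_pos, (eventually_gt_atTop (0 : ℝ)).mono fun v hv => ?_⟩
    change 0 < (2 * √(β * β' * v))⁻¹
    positivity
  have hlim := ((tendsto_integral_gaussian_mul_mfrac_comp hmono hcont).comp hscale).const_mul
    (2 * L)
  simp only [h, arsinh_zero, add_zero] at hlim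
  refine hlim.congr' ?_
  filter_upwards [eventually_gt_atTop 0] with v hv
  have hsv : 0 < √v := sqrt_pos.2 hv
  have hcov := setIntegral_Ioi_phiPlus_mul_div_eq (mul_pos hβ hsv) (mul_pos hβ' hsv)
    fun s => mfrac (s / L)
  rw [Function.comp_apply, hcov,
    show β * √v * (β' * √v) = β * β' * v by rw [mul_mul_mul_comm, mul_self_sqrt hv.le],
    mul_div_mul_right _ _ hsv.ne', mul_left_comm (exp _), ← mul_assoc (exp _), ← exp_add,
    show 2 * π * (β * β') * v + -2 * π * (β * β' * v) = 0 by ring, exp_zero, one_mul]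

theorem stmt_9_general (εϱ : ℝ) (hεϱ : 1 < εϱ) (β β' m : ℝ) (hm : 0 < m) (hββ' : β * β' = m) :
    Filter.Tendsto
      (fun v : ℝ =>
        Real.exp (2 * Real.pi * m * v) *
          (2 * Real.log εϱ *
            ∫ t in Set.Ioi (0 : ℝ),
              ((β * Real.sqrt v / t + β' * Real.sqrt v * t) *
                  Real.exp (-Real.pi *
                    ((β * Real.sqrt v / t) ^ 2 + (β' * Real.sqrt v * t) ^ 2))) *
                mfrac (Real.log t / Real.log εϱ) / t))
      Filter.atTop
      (nhds (Real.sign β *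
        (2 * Real.log εϱ * mfrac (Real.log (Real.sqrt |β / β'|) / Real.log εϱ)))) := by
  subst hββ'
  rcases mul_pos_iff.1 hm with ⟨hβ, hβ'⟩ | ⟨hβ, hβ'⟩
  · rw [sign_of_pos hβ, one_mul, abs_of_pos (div_pos hβ hβ')]
    exact tendsto_exp_mul_integral_phiPlus_of_pos hβ hβ' (log_pos hεϱ)
  · rw [sign_of_neg hβ, neg_one_mul, abs_of_pos (div_pos_of_neg_of_neg hβ hβ')]
    have h := (tendsto_exp_mul_integral_phiPlus_of_pos (neg_pos.2 hβ) (neg_pos.2 hβ')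
      (log_pos hεϱ)).neg
    simp only [neg_mul, neg_div, div_neg, phiPlus_neg, integral_neg, mul_neg, neg_neg] at h
    exact h

/-- The archimedean limit computation (eq. (claim)) in the proof of Theorem 2.8:
with `φ⁺_∞(x₁,x₂) = (x₁+x₂)e^{-π(x₁²+x₂²)}`, `m = ββ' > 0`, `sgn β = sgn β'`, and
`ε_ϱ > 1`, the limit as `v → ∞` of
`e^{2πmv} · 2 log ε_ϱ ∫₀^∞ φ⁺_∞(β√v/t, β'√v·t) {log t/log ε_ϱ} dt/t`
equals `sgn(β) · 2 log ε_ϱ · {log √|β/β'| / log ε_ϱ}`. -/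
theorem stmt_9 (εϱ : ℝ) (hεϱ : 1 < εϱ) (β β' m : ℝ) (hm : 0 < m) (hββ' : β * β' = m)
    (hsgn : Real.sign β = Real.sign β') :
    Filter.Tendsto
      (fun v : ℝ =>
        Real.exp (2 * Real.pi * m * v) *
          (2 * Real.log εϱ *
            ∫ t in Set.Ioi (0 : ℝ),
              ((β * Real.sqrt v / t + β' * Real.sqrt v * t) *
                  Real.exp (-Real.pi *
                    ((β * Real.sqrt v / t) ^ 2 + (β' * Real.sqrt v * t) ^ 2))) *
                mfrac (Real.log t / Real.log εϱ) / t))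
      Filter.atTop
      (nhds (Real.sign β *
        (2 * Real.log εϱ * mfrac (Real.log (Real.sqrt |β / β'|) / Real.log εϱ)))) :=
  stmt_9_general εϱ hεϱ β β' m hm hββ'
end

section
/- In the Fock model of the Weil representation for the dual pair (SL₂, O(2,2)), with polynomial model ℂ[𝔷₁,𝔷₂,𝔷₃,𝔷₄], 𝔳 = 𝔷₁+i𝔷₂, 𝔴 = 𝔷₃-i𝔷₄, and operators L₁+L₂ acting as 8π(∂_𝔳 + ∂_{𝔳̄})∂_𝔴 - (1/8π)(𝔳̄+𝔳)𝔴̄ and L acting as -8π ∂_𝔳∂_{𝔳̄} + (1/8π)𝔴𝔴̄, one has (L₁+L₂)(𝔴^{r+1} Q_r(𝔳,𝔳̄)) = -L(Q_r(𝔳,𝔳̄)(𝔳+𝔳̄)𝔴^r) for every r ≥ 0, where Q_r(X,Y) = (X+Y)^r P_r((X-Y)/(X+Y)). -/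
open MvPolynomial

/-- `Q_r(𝔳,𝔳̄) = ∑_{s=0}^r C(r,s)² 𝔳^{r-s}(-𝔳̄)^s` in the Fock polynomial model
`ℂ[𝔷₁,…]` with variables `0 ↦ 𝔳`, `1 ↦ 𝔳̄`, `2 ↦ 𝔴`, `3 ↦ 𝔴̄`. -/
noncomputable def QmvC (r : ℕ) : MvPolynomial (Fin 4) ℂ :=
  ∑ s ∈ Finset.range (r + 1), C ((r.choose s : ℂ) ^ 2) * (X 0) ^ (r - s) * (-X 1) ^ s

/-- The lowering operator `ω(L) = -8π ∂_𝔳∂_𝔳̄ + (1/8π)𝔴𝔴̄` in the Fock model. -/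
noncomputable def Lop (P : MvPolynomial (Fin 4) ℂ) : MvPolynomial (Fin 4) ℂ :=
  -C (8 * (Real.pi : ℂ)) * pderiv 0 (pderiv 1 P)
    + C (1 / (8 * (Real.pi : ℂ))) * (X 2 * X 3 * P)

/-- `ω(L₁) = 8π ∂_𝔳∂_𝔴 - (1/8π)𝔳̄𝔴̄`. -/
noncomputable def L1op (P : MvPolynomial (Fin 4) ℂ) : MvPolynomial (Fin 4) ℂ :=
  C (8 * (Real.pi : ℂ)) * pderiv 0 (pderiv 2 P)
    - C (1 / (8 * (Real.pi : ℂ))) * (X 1 * X 3 * P)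

/-- `ω(L₂) = 8π ∂_𝔳̄∂_𝔴 - (1/8π)𝔳𝔴̄`. -/
noncomputable def L2op (P : MvPolynomial (Fin 4) ℂ) : MvPolynomial (Fin 4) ℂ :=
  C (8 * (Real.pi : ℂ)) * pderiv 1 (pderiv 2 P)
    - C (1 / (8 * (Real.pi : ℂ))) * (X 0 * X 3 * P)

/-!
The multiplication terms of the two sides agree outright, and after
`∂_𝔴 𝔴 ^ (r + 1) = (r + 1) 𝔴 ^ r` the derivative terms reduce to
`∂_𝔳 ∂_𝔳̄ (Q_r (𝔳 + 𝔳̄)) = (r + 1) (∂_𝔳 + ∂_𝔳̄) Q_r`, i.e. to the homogenised Legendre equation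
`(𝔳 + 𝔳̄) ∂_𝔳 ∂_𝔳̄ Q_r = r (∂_𝔳 + ∂_𝔳̄) Q_r`. On a monomial `𝔳 ^ a 𝔳̄ ^ b` with `a + b = r` the
left side minus the right side is `-(b² 𝔳 ^ a 𝔳̄ ^ (b - 1) + a² 𝔳 ^ (a - 1) 𝔳̄ ^ b)`, and these
contributions cancel in pairs because `(s + 1) C(r, s + 1) = (r - s) C(r, s)`.
-/

namespace MvPolynomial

variable {σ R : Type*} [CommRing R] {i j : σ}

lemma pderiv_X_pow_mul_of_ne {k l : σ} (h : l ≠ k) (n : ℕ) (P : MvPolynomial σ R) :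
    pderiv k (X l ^ n * P) = X l ^ n * pderiv k P := by
  simp [pderiv_X_of_ne h]

lemma pderiv_X_pow_mul_X_pow_left (hij : i ≠ j) (a b : ℕ) :
    pderiv i (X i ^ a * X j ^ b : MvPolynomial σ R) = a • (X i ^ (a - 1) * X j ^ b) := by
  rw [mul_comm, pderiv_X_pow_mul_of_ne hij.symm, pderiv_pow, pderiv_X_self, nsmul_eq_mul]
  ring

lemma pderiv_X_pow_mul_X_pow_right (hij : i ≠ j) (a b : ℕ) :
    pderiv j (X i ^ a * X j ^ b : MvPolynomial σ R) = b • (X i ^ a * X j ^ (b - 1)) := by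
  rw [mul_comm, pderiv_X_pow_mul_X_pow_left hij.symm, mul_comm]

/-- In the coordinates `u = X i + X j`, `t = X i - X j`, on `u ^ r f (t / u)` this is `-u ^ (r - 1)`
times the Legendre operator `(1 - t²) f'' - 2 t f' + r (r + 1) f`. -/
noncomputable def legendreOp (r : ℕ) (i j : σ) : MvPolynomial σ R →ₗ[R] MvPolynomial σ R :=
  LinearMap.mulRight R (X i + X j) ∘ₗ (pderiv i).toLinearMap ∘ₗ (pderiv j).toLinearMap
    - r • ((pderiv i).toLinearMap + (pderiv j).toLinearMap)

lemma legendreOp_apply (r : ℕ) (P : MvPolynomial σ R) :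
    legendreOp r i j P
      = pderiv i (pderiv j P) * (X i + X j)
        - (r : MvPolynomial σ R) * (pderiv i P + pderiv j P) := by
  simp [legendreOp, mul_add]

lemma legendreOp_X_pow_mul_X_pow (hij : i ≠ j) {r a b : ℕ} (hab : a + b = r) :
    legendreOp r i j (X i ^ a * X j ^ b : MvPolynomial σ R)
      = -(b ^ 2 • (X i ^ a * X j ^ (b - 1)) + a ^ 2 • (X i ^ (a - 1) * X j ^ b)) := by
  subst hab
  rw [legendreOp_apply, pderiv_X_pow_mul_X_pow_right hij, map_nsmul,
    pderiv_X_pow_mul_X_pow_left hij, pderiv_X_pow_mul_X_pow_left hij]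
  rcases a with _ | a <;> rcases b with _ | b <;> simp [nsmul_eq_mul] <;> ring

noncomputable def legendreQ (r : ℕ) (i j : σ) : MvPolynomial σ R :=
  ∑ s ∈ Finset.range (r + 1), ((-1) ^ s * (r.choose s : R) ^ 2) • (X i ^ (r - s) * X j ^ s)

lemma legendreOp_legendreQ (hij : i ≠ j) (r : ℕ) :
    legendreOp r i j (legendreQ r i j : MvPolynomial σ R) = 0 := by
  have hcoeff (s : ℕ) : (-1) ^ (s + 1) * (r.choose (s + 1) : R) ^ 2 * ((s + 1) ^ 2 : ℕ)
      + (-1) ^ s * (r.choose s : R) ^ 2 * ((r - s) ^ 2 : ℕ) = 0 := by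
    have h := congrArg (fun n : ℕ ↦ (n : R) ^ 2) (Nat.choose_succ_right_eq r s)
    push_cast at h ⊢
    linear_combination -(-1 : R) ^ s * h
  simp only [legendreQ, map_sum, map_smul]
  rw [Finset.sum_congr rfl fun s hs ↦ by
    rw [legendreOp_X_pow_mul_X_pow hij (Nat.sub_add_cancel (Finset.mem_range_succ_iff.1 hs))]]
  simp only [smul_neg, Finset.sum_neg_distrib, neg_eq_zero, smul_add, Finset.sum_add_distrib]
  -- the two families of monomials telescope: `X i ^ (r - s) * X j ^ (s - 1)` at `s + 1` is the
  -- other one at `s`, and the boundary terms carry the factors `0 ^ 2`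
  rw [Finset.sum_range_succ', Finset.sum_range_succ]
  simp only [Nat.sub_self, zero_pow two_ne_zero, zero_smul, smul_zero, add_zero]
  simp only [← Nat.cast_smul_eq_nsmul R, smul_smul]
  rw [← Finset.sum_add_distrib]
  refine Finset.sum_eq_zero fun s _ ↦ ?_
  rw [Nat.add_sub_cancel, Nat.sub_sub, ← add_smul, hcoeff, zero_smul]

lemma pderiv_pderiv_legendreQ_mul_add (hij : i ≠ j) (r : ℕ) :
    pderiv i (pderiv j (legendreQ r i j * (X i + X j) : MvPolynomial σ R))
      = (r + 1 : MvPolynomial σ R) * (pderiv i (legendreQ r i j) + pderiv j (legendreQ r i j)) := by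
  have h := legendreOp_legendreQ (R := R) hij r
  rw [legendreOp_apply] at h
  simp only [pderiv_mul, map_add, pderiv_X_self, pderiv_X_of_ne hij, pderiv_X_of_ne hij.symm,
    Derivation.map_one_eq_zero, map_zero, mul_zero, add_zero]
  linear_combination h

lemma pderiv_legendreQ_of_ne {k : σ} (hi : i ≠ k) (hj : j ≠ k) (r : ℕ) :
    pderiv k (legendreQ r i j : MvPolynomial σ R) = 0 := by
  simp [legendreQ, pderiv_X_of_ne hi, pderiv_X_of_ne hj]

end MvPolynomial

open MvPolynomial

lemma QmvC_eq_legendreQ (r : ℕ) : QmvC r = legendreQ r 0 1 := by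
  refine Finset.sum_congr rfl fun s _ ↦ ?_
  rw [neg_pow, smul_eq_C_mul]
  simp only [map_mul, map_pow, map_neg, map_one]
  ring

/-- `(L₁+L₂)(𝔴^{r+1} Q_r(𝔳,𝔳̄)) = -L(Q_r(𝔳,𝔳̄)(𝔳+𝔳̄)𝔴^r)`. -/
theorem stmt_11 (r : ℕ) :
    L1op ((X 2) ^ (r + 1) * QmvC r) + L2op ((X 2) ^ (r + 1) * QmvC r)
      = -Lop (QmvC r * (X 0 + X 1) * (X 2) ^ r) := by
  have hr : (r + 1 : MvPolynomial (Fin 4) ℂ) = C ((r : ℂ) + 1) := by simp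
  have hw : pderiv 2 (X 2 ^ (r + 1) * QmvC r) = C ((r : ℂ) + 1) * (X 2 ^ r * QmvC r) := by
    rw [QmvC_eq_legendreQ, pderiv_mul, pderiv_legendreQ_of_ne (by decide) (by decide), pderiv_pow,
      pderiv_X_self, ← hr]
    push_cast
    ring
  have hQ := pderiv_pderiv_legendreQ_mul_add (R := ℂ) (i := (0 : Fin 4)) (j := 1) (by decide) r
  rw [← QmvC_eq_legendreQ, hr] at hQ
  rw [mul_comm _ (X 2 ^ r)]
  simp only [L1op, L2op, Lop, hw, pderiv_C_mul,
    pderiv_X_pow_mul_of_ne (by decide : (2 : Fin 4) ≠ 0), pderiv_X_pow_mul_of_ne (by decide : (2 : Fin 4) ≠ 1), hQ]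
  ring
end

section
/- Let A, B ∈ ℝ with A > 0, and define K(𝐯) = exp(-π(A/√𝐯 - B√𝐯)²)·(A/√𝐯 + B√𝐯) for 𝐯 > 0. Then for any constants C > 0, s ∈ ℝ, ε ∈ (0,1), and a,b,c ∈ ℕ₀, with B ranging in a compact subset of ℝ: (i) ∫₀^{A^{1-ε}} e^{-C𝐯}𝐯^s K(𝐯) d𝐯/𝐯 ≪ e^{-A^{ε/2}}, and (ii) ∫_{A^{1-ε}}^∞ e^{-C𝐯}𝐯^s K(𝐯) d𝐯/𝐯 ≪ e^{-A^{(1-ε)/2}} as A → ∞. -/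
open MeasureTheory

/-- `K(𝐯) = e^{-π(A/√𝐯 - B√𝐯)²}(A/√𝐯 + B√𝐯)`. -/
noncomputable def Kker (A B v : ℝ) : ℝ :=
  Real.exp (-Real.pi * (A / Real.sqrt v - B * Real.sqrt v) ^ 2) *
    (A / Real.sqrt v + B * Real.sqrt v)

/-!
Write `X = A/√v - B√v` and let `|B| ≤ M`. Since `K = e^{-πX²}(X + 2B√v)` and `|X| ≤ e^{X²}`,
`|K(v)| ≤ (1 + 2M√v) e^{-X²}`, and the remaining weight `v^{s-1}(1 + 2M√v)` is dominated by
`v^{-m} + v^m` for an integer `m > |s|`.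

On `(0, A^{1-ε})` the Gaussian factor wins: once `A^{2ε} ≥ 4M²`, the quantity `u = A²/(4v)`
satisfies `u ≤ X²`, `A^{1+ε}/4 ≤ u` and `v^{±1} ≤ 4u`, so the integrand is `O(u^m e^{-u})`,
hence `O(e^{-A^{1+ε}/8})`, on an interval of length `A^{1-ε}`.

On `(A^{1-ε}, ∞)` one drops the Gaussian factor and absorbs `v^m` into half of `e^{-Cv}`;
the tail integral of `e^{-Cv/2}` is `O(e^{-C A^{1-ε}/2}) = O(e^{-A^{(1-ε)/2}})`.
-/

open Real Set Filter
open scoped Nat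

lemma pow_mul_exp_neg_le (k : ℕ) {u : ℝ} (hu : 0 ≤ u) :
    u ^ k * exp (-u) ≤ 2 ^ k * k ! * exp (-(u / 2)) := by
  have h : (u / 2) ^ k ≤ k ! * exp (u / 2) := by
    have := pow_div_factorial_le_exp (u / 2) (by positivity) k
    rw [div_le_iff₀ (by positivity)] at this
    linarith
  have hexp : exp (u / 2) * exp (-u) = exp (-(u / 2)) := by rw [← exp_add]; ring_nf
  calc u ^ k * exp (-u) = 2 ^ k * (u / 2) ^ k * exp (-u) := by
        rw [div_pow, mul_div_cancel₀ _ (by positivity)]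
    _ ≤ 2 ^ k * (k ! * exp (u / 2)) * exp (-u) := by gcongr
    _ = 2 ^ k * k ! * exp (-(u / 2)) := by rw [← hexp]; ring

lemma pow_mul_exp_neg_mul_le {C v : ℝ} (m : ℕ) (hC : 0 < C) (hv : 0 ≤ v) :
    v ^ m * exp (-C * v) ≤ (2 / C) ^ m * m ! * exp (-(C / 2) * v) := by
  have hexp : -(C / 2) * v = -(C * v / 2) := by ring
  calc v ^ m * exp (-C * v) = (C * v) ^ m * exp (-(C * v)) / C ^ m := by
        rw [mul_pow, neg_mul]; field_simp
    _ ≤ 2 ^ m * m ! * exp (-(C * v / 2)) / C ^ m :=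
        div_le_div_of_nonneg_right (pow_mul_exp_neg_le m (by positivity)) (by positivity)
    _ = (2 / C) ^ m * m ! * exp (-(C / 2) * v) := by rw [hexp, div_pow]; ring

lemma rpow_le_inv_pow_add_pow {v t : ℝ} {m : ℕ} (hv : 0 < v) (ht : |t| ≤ m) :
    v ^ t ≤ v⁻¹ ^ m + v ^ m := by
  rcases le_total v 1 with hv1 | hv1
  · have : v ^ t ≤ v⁻¹ ^ m := by
      rw [inv_pow, ← rpow_natCast, ← rpow_neg hv.le]
      exact rpow_le_rpow_of_exponent_ge hv hv1 (neg_le_of_abs_le ht)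
    linarith [pow_nonneg hv.le m]
  · have : v ^ t ≤ v ^ m := by
      rw [← rpow_natCast]
      exact rpow_le_rpow_of_exponent_le hv1 (le_of_abs_le ht)
    linarith [pow_nonneg (inv_nonneg.2 hv.le) m]

lemma abs_le_exp_sq (t : ℝ) : |t| ≤ exp (t ^ 2) := by
  nlinarith [sq_abs t, sq_nonneg (|t| - 1), add_one_le_exp (t ^ 2), abs_nonneg t]

lemma abs_Kker_le {A B M : ℝ} (v : ℝ) (hB : |B| ≤ M) :
    |Kker A B v| ≤ (1 + 2 * M * √v) * exp (-(A / √v - B * √v) ^ 2) := by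
  set X := A / √v - B * √v
  have hM : 0 ≤ M := (abs_nonneg B).trans hB
  have hK : Kker A B v = exp (-π * X ^ 2) * (X + 2 * B * √v) := by rw [Kker]; ring
  have hsum : |X + 2 * B * √v| ≤ (1 + 2 * M * √v) * exp (X ^ 2) := by
    have hBv : |2 * B * √v| ≤ 2 * M * √v := by
      rw [abs_mul, abs_mul, abs_two, abs_of_nonneg (sqrt_nonneg v)]; gcongr
    have hexp : 2 * M * √v ≤ 2 * M * √v * exp (X ^ 2) :=
      le_mul_of_one_le_right (by positivity) (one_le_exp (sq_nonneg X))
    linarith [abs_add_le X (2 * B * √v), abs_le_exp_sq X]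
  have hpi : exp (-π * X ^ 2) * exp (X ^ 2) ≤ exp (-X ^ 2) := by
    rw [← exp_add]
    exact exp_le_exp.2 (by nlinarith [pi_gt_three, sq_nonneg X])
  calc |Kker A B v| = exp (-π * X ^ 2) * |X + 2 * B * √v| := by
        rw [hK, abs_mul, abs_of_pos (exp_pos _)]
    _ ≤ exp (-π * X ^ 2) * ((1 + 2 * M * √v) * exp (X ^ 2)) := by gcongr
    _ = (1 + 2 * M * √v) * (exp (-π * X ^ 2) * exp (X ^ 2)) := by ring
    _ ≤ (1 + 2 * M * √v) * exp (-X ^ 2) := by gcongr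

lemma abs_integrand_le {C s A B M v : ℝ} {n : ℕ} (hv : 0 < v) (hB : |B| ≤ M) (hs : |s| ≤ n) :
    |exp (-C * v) * v ^ s * Kker A B v / v| ≤
      2 * (1 + M) * (v⁻¹ ^ (n + 1) + v ^ (n + 1)) * exp (-C * v) *
        exp (-(A / √v - B * √v) ^ 2) := by
  have hM : 0 ≤ M := (abs_nonneg B).trans hB
  have hsqrt : 2 * √v ≤ 1 + v := by nlinarith [sq_nonneg (√v - 1), sq_sqrt hv.le]
  have hweight : 1 + 2 * M * √v ≤ (1 + M) * (1 + v) := by nlinarith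
  have hpow : v ^ s / v * (1 + v) ≤ 2 * (v⁻¹ ^ (n + 1) + v ^ (n + 1)) := by
    have hs' : |s - 1| ≤ ((n + 1 : ℕ) : ℝ) := by
      push_cast; exact (abs_sub _ _).trans (by rw [abs_one]; linarith)
    have hs'' : |s| ≤ ((n + 1 : ℕ) : ℝ) := by push_cast; linarith
    have h1 := rpow_le_inv_pow_add_pow hv hs'
    have h2 := rpow_le_inv_pow_add_pow hv hs''
    rw [rpow_sub_one hv.ne'] at h1
    have : v ^ s / v * (1 + v) = v ^ s / v + v ^ s := by field_simp
    linarith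
  calc |exp (-C * v) * v ^ s * Kker A B v / v|
      = exp (-C * v) * (v ^ s / v) * |Kker A B v| := by
        rw [abs_div, abs_mul, abs_mul, abs_of_pos (exp_pos _), abs_of_pos (rpow_pos_of_pos hv s),
          abs_of_pos hv]; ring
    _ ≤ exp (-C * v) * (v ^ s / v) * ((1 + M) * (1 + v) * exp (-(A / √v - B * √v) ^ 2)) := by
        gcongr
        exact (abs_Kker_le v hB).trans (by gcongr)
    _ = (1 + M) * (v ^ s / v * (1 + v)) * exp (-C * v) * exp (-(A / √v - B * √v) ^ 2) := by ring
    _ ≤ (1 + M) * (2 * (v⁻¹ ^ (n + 1) + v ^ (n + 1))) * exp (-C * v) *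
          exp (-(A / √v - B * √v) ^ 2) := by gcongr
    _ = _ := by ring

lemma inv_pow_add_pow_mul_exp_le {A B M ε v : ℝ} (m : ℕ) (hA : 1 ≤ A) (hε : 0 ≤ ε)
    (hMA : 4 * M ^ 2 ≤ A ^ (2 * ε)) (hB : |B| ≤ M) (hv : 0 < v) (hvA : v ≤ A ^ (1 - ε)) :
    (v⁻¹ ^ m + v ^ m) * exp (-(A / √v - B * √v) ^ 2) ≤
      2 * 8 ^ m * m ! * exp (-(A ^ (1 + ε) / 8)) := by
  have hA0 : 0 < A := one_pos.trans_le hA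
  set u := A ^ 2 / (4 * v) with hu_def
  have hu0 : 0 ≤ u := by positivity
  have hsplit : A ^ (1 + ε) = A ^ (1 - ε) * A ^ (2 * ε) := by rw [← rpow_add hA0]; ring_nf
  have hsq : A ^ 2 = A ^ (1 - ε) * A ^ (1 + ε) := by
    rw [← rpow_add hA0, ← rpow_natCast]; norm_num
  have hPu : A ^ (1 + ε) ≤ 4 * u := by
    rw [hu_def, mul_div_assoc', le_div_iff₀ (by positivity), hsq]
    have := rpow_pos_of_pos hA0 (1 + ε)
    nlinarith
  have hMv : M ^ 2 * v ≤ u := by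
    have : M ^ 2 * v ≤ M ^ 2 * A ^ (1 - ε) := by gcongr
    nlinarith [rpow_pos_of_pos hA0 (1 - ε)]
  have hX : u ≤ (A / √v - B * √v) ^ 2 := by
    have hB2 : B ^ 2 ≤ M ^ 2 := sq_le_sq' (abs_le.1 hB).1 (abs_le.1 hB).2
    have h1 : (A / √v) ^ 2 = 4 * u := by rw [div_pow, sq_sqrt hv.le, hu_def]; field_simp
    have h2 : (B * √v) ^ 2 = B ^ 2 * v := by rw [mul_pow, sq_sqrt hv.le]
    nlinarith [sq_nonneg (A / √v - 2 * (B * √v))]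
  have hinv : v⁻¹ ≤ 4 * u := by
    have : 1 ≤ A ^ 2 := one_le_pow₀ hA
    rw [hu_def, mul_div_assoc', le_div_iff₀ (by positivity), inv_mul_eq_div, div_le_iff₀ hv]
    nlinarith
  have hvu : v ≤ 4 * u :=
    hvA.trans ((rpow_le_rpow_of_exponent_le hA (by linarith)).trans hPu)
  calc (v⁻¹ ^ m + v ^ m) * exp (-(A / √v - B * √v) ^ 2)
      ≤ (2 * (4 * u) ^ m) * exp (-u) := by
        gcongr
        linarith [pow_le_pow_left₀ (inv_nonneg.2 hv.le) hinv m, pow_le_pow_left₀ hv.le hvu m]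
    _ = 2 * 4 ^ m * (u ^ m * exp (-u)) := by rw [mul_pow]; ring
    _ ≤ 2 * 4 ^ m * (2 ^ m * m ! * exp (-(u / 2))) :=
        mul_le_mul_of_nonneg_left (pow_mul_exp_neg_le m hu0) (by positivity)
    _ = 2 * 8 ^ m * m ! * exp (-(u / 2)) := by
        rw [show (8 : ℝ) ^ m = 4 ^ m * 2 ^ m by rw [← mul_pow]; norm_num]; ring
    _ ≤ 2 * 8 ^ m * m ! * exp (-(A ^ (1 + ε) / 8)) :=
        mul_le_mul_of_nonneg_left (exp_le_exp.2 (by linarith)) (by positivity)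

lemma abs_integral_Ioo_le {C : ℝ} (s : ℝ) {ε M : ℝ} (hC : 0 ≤ C) (hε : 0 < ε) (hM : 0 ≤ M) :
    ∃ c > 0, ∀ᶠ A in atTop, ∀ B, |B| ≤ M →
      |∫ v in Ioo 0 (A ^ (1 - ε)), exp (-C * v) * v ^ s * Kker A B v / v| ≤
        c * exp (-(A ^ (ε / 2))) := by
  set m := ⌈|s|⌉₊ + 1
  set c : ℝ := 4 * (1 + M) * 8 ^ m * (m ! : ℝ)
  refine ⟨c, by positivity, ?_⟩
  filter_upwards [eventually_ge_atTop 1,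
    (tendsto_rpow_atTop (by positivity : 0 < 2 * ε)).eventually_ge_atTop (max (4 * M ^ 2) 16),
    (tendsto_rpow_atTop (by positivity : 0 < 1 + ε / 2)).eventually_ge_atTop 16]
    with A hA hA₁ hA₂ B hB
  have hA0 : 0 < A := one_pos.trans_le hA
  set R := A ^ (1 - ε)
  have hR : 0 < R := rpow_pos_of_pos hA0 _
  have hpoint : ∀ v ∈ Ioo 0 R, ‖exp (-C * v) * v ^ s * Kker A B v / v‖ ≤
      c * exp (-(A ^ (1 + ε) / 8)) := by
    rintro v ⟨hv, hvR⟩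
    have hgauss := inv_pow_add_pow_mul_exp_le m hA hε.le (le_of_max_le_left hA₁) hB hv hvR.le
    have hexp : exp (-C * v) ≤ 1 := exp_le_one_iff.2 (by nlinarith)
    calc ‖exp (-C * v) * v ^ s * Kker A B v / v‖
        ≤ 2 * (1 + M) * (v⁻¹ ^ m + v ^ m) * exp (-C * v) * exp (-(A / √v - B * √v) ^ 2) :=
          abs_integrand_le hv hB (Nat.le_ceil _)
      _ = 2 * (1 + M) * ((v⁻¹ ^ m + v ^ m) * exp (-(A / √v - B * √v) ^ 2)) * exp (-C * v) := by
          ring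
      _ ≤ 2 * (1 + M) * (2 * 8 ^ m * m ! * exp (-(A ^ (1 + ε) / 8))) * 1 := by gcongr
      _ = c * exp (-(A ^ (1 + ε) / 8)) := by ring
  have hexponent : R + A ^ (ε / 2) ≤ A ^ (1 + ε) / 8 := by
    have h₁ : A ^ (1 + ε) = R * A ^ (2 * ε) := by rw [← rpow_add hA0]; ring_nf
    have h₂ : A ^ (1 + ε) = A ^ (ε / 2) * A ^ (1 + ε / 2) := by rw [← rpow_add hA0]; ring_nf
    nlinarith [le_of_max_le_right hA₁, rpow_pos_of_pos hA0 (ε / 2)]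
  calc |∫ v in Ioo 0 R, exp (-C * v) * v ^ s * Kker A B v / v|
      ≤ c * exp (-(A ^ (1 + ε) / 8)) * volume.real (Ioo 0 R) :=
        norm_setIntegral_le_of_norm_le_const measure_Ioo_lt_top hpoint
    _ = c * (R * exp (-(A ^ (1 + ε) / 8))) := by rw [volume_real_Ioo_of_le hR.le, sub_zero]; ring
    _ ≤ c * (exp R * exp (-(A ^ (1 + ε) / 8))) := by gcongr; linarith [add_one_le_exp R]
    _ ≤ c * exp (-(A ^ (ε / 2))) := by
        rw [← exp_add]; gcongr; linarith

lemma abs_integral_Ioi_le {C : ℝ} (s : ℝ) {ε M : ℝ} (hC : 0 < C) (hε : ε < 1) (hM : 0 ≤ M) :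
    ∃ c > 0, ∀ᶠ A in atTop, ∀ B, |B| ≤ M →
      |∫ v in Ioi (A ^ (1 - ε)), exp (-C * v) * v ^ s * Kker A B v / v| ≤
        c * exp (-(A ^ ((1 - ε) / 2))) := by
  set m := ⌈|s|⌉₊ + 1
  set c : ℝ := 4 * (1 + M) * (2 / C) ^ m * (m ! : ℝ)
  refine ⟨c * (2 / C), by positivity, ?_⟩
  filter_upwards [eventually_gt_atTop 0,
    (tendsto_rpow_atTop (by linarith : 0 < 1 - ε)).eventually_ge_atTop 1,
    (tendsto_rpow_atTop (by linarith : 0 < (1 - ε) / 2)).eventually_ge_atTop (2 / C)]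
    with A hA0 hR1 hAC B hB
  set R := A ^ (1 - ε)
  have hpoint : ∀ v ∈ Ioi R,
      ‖exp (-C * v) * v ^ s * Kker A B v / v‖ ≤ c * exp (-(C / 2) * v) := by
    intro v hv
    have hv1 : 1 ≤ v := hR1.trans hv.le
    have hv0 : 0 < v := one_pos.trans_le hv1
    have hinv : v⁻¹ ^ m ≤ v ^ m :=
      pow_le_pow_left₀ (inv_nonneg.2 hv0.le) ((inv_le_one_of_one_le₀ hv1).trans hv1) m
    have hgauss : exp (-(A / √v - B * √v) ^ 2) ≤ 1 := exp_le_one_iff.2 (neg_nonpos.2 (sq_nonneg _))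
    calc ‖exp (-C * v) * v ^ s * Kker A B v / v‖
        ≤ 2 * (1 + M) * (v⁻¹ ^ m + v ^ m) * exp (-C * v) * exp (-(A / √v - B * √v) ^ 2) :=
          abs_integrand_le hv0 hB (Nat.le_ceil _)
      _ ≤ 2 * (1 + M) * (v ^ m + v ^ m) * exp (-C * v) * 1 := by gcongr
      _ = 4 * (1 + M) * (v ^ m * exp (-C * v)) := by ring
      _ ≤ 4 * (1 + M) * ((2 / C) ^ m * m ! * exp (-(C / 2) * v)) :=
          mul_le_mul_of_nonneg_left (pow_mul_exp_neg_mul_le m hC hv0.le) (by positivity)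
      _ = c * exp (-(C / 2) * v) := by ring
  have hRA : A ^ ((1 - ε) / 2) ≤ C / 2 * R := by
    have hsplit : R = A ^ ((1 - ε) / 2) * A ^ ((1 - ε) / 2) := by rw [← rpow_add hA0, add_halves]
    have := rpow_pos_of_pos hA0 ((1 - ε) / 2)
    calc A ^ ((1 - ε) / 2) = C / 2 * (2 / C) * A ^ ((1 - ε) / 2) := by field_simp
      _ ≤ C / 2 * A ^ ((1 - ε) / 2) * A ^ ((1 - ε) / 2) := by gcongr
      _ = C / 2 * R := by rw [hsplit]; ring
  calc |∫ v in Ioi R, exp (-C * v) * v ^ s * Kker A B v / v|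
      ≤ ∫ v in Ioi R, c * exp (-(C / 2) * v) :=
        norm_integral_le_of_norm_le ((integrableOn_exp_mul_Ioi (by linarith) R).const_mul c)
          (ae_restrict_of_forall_mem measurableSet_Ioi hpoint)
    _ = c * (2 / C) * exp (-(C / 2 * R)) := by
        rw [integral_const_mul, integral_exp_mul_Ioi (by linarith)]; field_simp
    _ ≤ c * (2 / C) * exp (-(A ^ ((1 - ε) / 2))) := by gcongr

/-- For constants `C > 0`, `s ∈ ℝ`, `ε ∈ (0,1)` and `B` ranging in a compact set `T`,
uniformly for `A` sufficiently large:
(i) `∫₀^{A^{1-ε}} e^{-C𝐯}𝐯^s K(𝐯) d𝐯/𝐯 ≪ e^{-A^{ε/2}}`, and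
(ii) `∫_{A^{1-ε}}^∞ e^{-C𝐯}𝐯^s K(𝐯) d𝐯/𝐯 ≪ e^{-A^{(1-ε)/2}}`. -/
theorem stmt_16 (C s ε : ℝ) (hC : 0 < C) (hε : ε ∈ Set.Ioo (0 : ℝ) 1)
    (T : Set ℝ) (hT : IsCompact T) :
    ∃ c A₀ : ℝ, 0 < c ∧ 0 < A₀ ∧ ∀ A : ℝ, A₀ ≤ A → ∀ B ∈ T,
      |∫ v in Set.Ioo (0 : ℝ) (A ^ (1 - ε)), Real.exp (-C * v) * v ^ s * Kker A B v / v|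
          ≤ c * Real.exp (-(A ^ (ε / 2)))
      ∧ |∫ v in Set.Ioi (A ^ (1 - ε)), Real.exp (-C * v) * v ^ s * Kker A B v / v|
          ≤ c * Real.exp (-(A ^ ((1 - ε) / 2))) := by
  obtain ⟨M, hM, hTM⟩ := hT.isBounded.exists_pos_norm_le
  obtain ⟨c₁, hc₁, h₁⟩ := abs_integral_Ioo_le s hC.le hε.1 hM.le
  obtain ⟨c₂, hc₂, h₂⟩ := abs_integral_Ioi_le s hC hε.2 hM.le
  obtain ⟨A₀, hA₀⟩ := eventually_atTop.1 (h₁.and h₂)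
  refine ⟨max c₁ c₂, max A₀ 1, by positivity, by positivity, fun A hA B hB => ?_⟩
  obtain ⟨hsmall, hlarge⟩ := hA₀ A (le_of_max_le_left hA)
  exact ⟨(hsmall B (hTM B hB)).trans (by gcongr; exact le_max_left _ _),
    (hlarge B (hTM B hB)).trans (by gcongr; exact le_max_right _ _)⟩
end
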